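/- (Key inequality for TV/L1 ADM.) Let V, W be spaces of real m×n and p×q matrices with the Frobenius inner product, H : V → V and L : V → W linear, F : V → ℝ and G : W → ℝ convex, β, ρ > 0, and L_{β,ρ}(X,R,Y,Z,W') = F(R) + G(Y) + (β/2)‖L(X) − Y‖_F² + ⟨L(X) − Y, Z⟩_F + (ρ/2)‖H(X) − R‖_F² + ⟨H(X) − R, W'⟩_F. Suppose (X*,R*,Y*,Z*,W'*) is a saddle point of L_{β,ρ} (so that in particular L(X*) = Y* and H(X*) = R*), and suppose (X_k,R_k,Y_k) minimizes (X,R,Y) ↦ L_{β,ρ}(X,R,Y,Z_k,W_k) over V×V×W. Then −βρ⟨Z_k − Z*, L(X_k) − Y_k⟩_F − βρ⟨W_k − W'*, H(X_k) − R_k⟩_F ≥ β²ρ‖L(X_k) − Y_k‖_F² + βρ²‖H(X_k) − R_k‖_F². -/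

import Mathlib

open Matrix

/-- Frobenius inner product on real matrices. -/
noncomputable def fip {m n : ℕ} (A B : Matrix (Fin m) (Fin n) ℝ) : ℝ :=
  (Aᵀ * B).trace

/-- Frobenius norm on real matrices. -/
noncomputable def fnorm {m n : ℕ} (A : Matrix (Fin m) (Fin n) ℝ) : ℝ :=
  Real.sqrt (fip A A)

/-- The augmented Lagrangian `L_{β,ρ}(X,R,Y,Z,W')` for the TV/L1 model. -/
noncomputable def lag5 {m n p q : ℕ}
    (H : Matrix (Fin m) (Fin n) ℝ →ₗ[ℝ] Matrix (Fin m) (Fin n) ℝ)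
    (L : Matrix (Fin m) (Fin n) ℝ →ₗ[ℝ] Matrix (Fin p) (Fin q) ℝ)
    (F : Matrix (Fin m) (Fin n) ℝ → ℝ) (G : Matrix (Fin p) (Fin q) ℝ → ℝ)
    (β ρ : ℝ)
    (X R : Matrix (Fin m) (Fin n) ℝ) (Y Z : Matrix (Fin p) (Fin q) ℝ)
    (W' : Matrix (Fin m) (Fin n) ℝ) : ℝ :=
  F R + G Y + β / 2 * (fnorm (L X - Y)) ^ 2 + fip (L X - Y) Z
    + ρ / 2 * (fnorm (H X - R)) ^ 2 + fip (H X - R) W'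

/-- Saddle point of the five-variable augmented Lagrangian. -/
def IsSaddle5 {m n p q : ℕ}
    (Φ : Matrix (Fin m) (Fin n) ℝ → Matrix (Fin m) (Fin n) ℝ →
      Matrix (Fin p) (Fin q) ℝ → Matrix (Fin p) (Fin q) ℝ →
      Matrix (Fin m) (Fin n) ℝ → ℝ)
    (Xs Rs : Matrix (Fin m) (Fin n) ℝ) (Ys Zs : Matrix (Fin p) (Fin q) ℝ)
    (Ws : Matrix (Fin m) (Fin n) ℝ) : Prop :=
  ∀ X R Y Z W', Φ Xs Rs Ys Z W' ≤ Φ Xs Rs Ys Zs Ws ∧ Φ Xs Rs Ys Zs Ws ≤ Φ X R Y Zs Ws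

/-!
If `u₀` minimises a convex function plus a smooth one, moving a fraction `t` towards any `u`
and letting `t → 0` gives the first-order variational inequality at `u₀`. At the saddle point
the constraints hold, so the penalty contributes nothing there; at the iterate it contributes
`β ‖L Xₖ - Yₖ‖² + ρ ‖H Xₖ - Rₖ‖²`. Adding the two variational inequalities, the values of
`F` and `G` cancel and only the claimed inequality (divided by `βρ`) remains.
-/

open Filter Topology

lemma nonneg_of_forall_mul_add_sq_mul_nonneg {a c : ℝ}
    (h : ∀ t ∈ Set.Ioc (0 : ℝ) 1, 0 ≤ t * a + t ^ 2 * c) : 0 ≤ a := by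
  have hlim : Tendsto (fun t : ℝ => a + t * c) (𝓝[>] 0) (𝓝 a) := by
    have h0 : Tendsto (fun t : ℝ => a + t * c) (𝓝 0) (𝓝 (a + 0 * c)) :=
      tendsto_const_nhds.add (tendsto_id.mul_const c)
    simpa using h0.mono_left nhdsWithin_le_nhds
  refine ge_of_tendsto hlim ?_
  filter_upwards [Ioo_mem_nhdsGT one_pos] with t ht
  have hprod : 0 ≤ t * (a + t * c) := by
    have := h t ⟨ht.1, ht.2.le⟩
    linarith
  exact (mul_nonneg_iff_of_pos_left ht.1).mp hprod

section Frobenius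

variable {m n : ℕ}

lemma fip_eq_dotProduct_vec (A B : Matrix (Fin m) (Fin n) ℝ) : fip A B = vec A ⬝ᵥ vec B :=
  (vec_dotProduct_vec A B).symm

lemma fip_comm (A B : Matrix (Fin m) (Fin n) ℝ) : fip A B = fip B A := by
  simp only [fip_eq_dotProduct_vec, dotProduct_comm]

lemma fip_add_left (A B C : Matrix (Fin m) (Fin n) ℝ) : fip (A + B) C = fip A C + fip B C := by
  simp only [fip_eq_dotProduct_vec, vec_add, add_dotProduct]

lemma fip_add_right (A B C : Matrix (Fin m) (Fin n) ℝ) : fip A (B + C) = fip A B + fip A C := by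
  simp only [fip_eq_dotProduct_vec, vec_add, dotProduct_add]

lemma fip_sub_left (A B C : Matrix (Fin m) (Fin n) ℝ) : fip (A - B) C = fip A C - fip B C := by
  simp only [fip_eq_dotProduct_vec, vec_sub, sub_dotProduct]

lemma fip_neg_left (A B : Matrix (Fin m) (Fin n) ℝ) : fip (-A) B = -fip A B := by
  simp only [fip_eq_dotProduct_vec, vec_neg, neg_dotProduct]

lemma fip_smul_left (t : ℝ) (A B : Matrix (Fin m) (Fin n) ℝ) : fip (t • A) B = t * fip A B := by
  simp only [fip_eq_dotProduct_vec, vec_smul, smul_dotProduct, smul_eq_mul]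

lemma fip_smul_right (t : ℝ) (A B : Matrix (Fin m) (Fin n) ℝ) : fip A (t • B) = t * fip A B := by
  simp only [fip_eq_dotProduct_vec, vec_smul, dotProduct_smul, smul_eq_mul]

lemma fip_self_nonneg (A : Matrix (Fin m) (Fin n) ℝ) : 0 ≤ fip A A := by
  rw [fip_eq_dotProduct_vec]
  exact Fintype.sum_nonneg fun _ => mul_self_nonneg _

lemma fip_self_eq_zero {A : Matrix (Fin m) (Fin n) ℝ} : fip A A = 0 ↔ A = 0 := by
  rw [fip_eq_dotProduct_vec, dotProduct_self_eq_zero, vec_eq_zero_iff]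

lemma fnorm_sq (A : Matrix (Fin m) (Fin n) ℝ) : fnorm A ^ 2 = fip A A :=
  Real.sq_sqrt (fip_self_nonneg A)

end Frobenius

noncomputable def augPenalty {m n : ℕ} (c : ℝ) (r Z : Matrix (Fin m) (Fin n) ℝ) : ℝ :=
  c / 2 * fnorm r ^ 2 + fip r Z

lemma augPenalty_add_smul {m n : ℕ} (c t : ℝ) (r d Z : Matrix (Fin m) (Fin n) ℝ) :
    augPenalty c (r + t • d) Z =
      augPenalty c r Z + t * fip d (c • r + Z) + t ^ 2 * (c / 2 * fip d d) := by
  simp only [augPenalty, fnorm_sq, fip_add_left, fip_add_right, fip_smul_left, fip_smul_right]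
  rw [fip_comm d r]
  ring

section Lagrangian

variable {m n p q : ℕ}
  (H : Matrix (Fin m) (Fin n) ℝ →ₗ[ℝ] Matrix (Fin m) (Fin n) ℝ)
  (L : Matrix (Fin m) (Fin n) ℝ →ₗ[ℝ] Matrix (Fin p) (Fin q) ℝ)
  (F : Matrix (Fin m) (Fin n) ℝ → ℝ) (G : Matrix (Fin p) (Fin q) ℝ → ℝ) (β ρ : ℝ)

lemma lag5_eq_augPenalty (X R : Matrix (Fin m) (Fin n) ℝ) (Y Z : Matrix (Fin p) (Fin q) ℝ)
    (W : Matrix (Fin m) (Fin n) ℝ) :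
    lag5 H L F G β ρ X R Y Z W =
      F R + G Y + augPenalty β (L X - Y) Z + augPenalty ρ (H X - R) W := by
  simp only [lag5, augPenalty]
  ring

lemma feasible_of_isSaddle5_lag5 {Xs Rs : Matrix (Fin m) (Fin n) ℝ}
    {Ys Zs : Matrix (Fin p) (Fin q) ℝ} {Ws : Matrix (Fin m) (Fin n) ℝ}
    (hsaddle : IsSaddle5 (lag5 H L F G β ρ) Xs Rs Ys Zs Ws) : L Xs = Ys ∧ H Xs = Rs := by
  -- shifting the multipliers by the residuals raises the Lagrangian by the squared residuals
  have hshift := (hsaddle Xs Rs Ys (Zs + (L Xs - Ys)) (Ws + (H Xs - Rs))).1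
  simp only [lag5, fip_add_right] at hshift
  have hL := fip_self_nonneg (L Xs - Ys)
  have hH := fip_self_nonneg (H Xs - Rs)
  exact ⟨sub_eq_zero.mp (fip_self_eq_zero.mp (by linarith)),
    sub_eq_zero.mp (fip_self_eq_zero.mp (by linarith))⟩

theorem lag5_variational_inequality (hF : ConvexOn ℝ Set.univ F) (hG : ConvexOn ℝ Set.univ G)
    {X₀ R₀ : Matrix (Fin m) (Fin n) ℝ} {Y₀ Z : Matrix (Fin p) (Fin q) ℝ}
    {W : Matrix (Fin m) (Fin n) ℝ}
    (hmin : ∀ X R Y, lag5 H L F G β ρ X₀ R₀ Y₀ Z W ≤ lag5 H L F G β ρ X R Y Z W)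
    (X R : Matrix (Fin m) (Fin n) ℝ) (Y : Matrix (Fin p) (Fin q) ℝ) :
    F R₀ + G Y₀ ≤ F R + G Y
      + fip ((L X - Y) - (L X₀ - Y₀)) (β • (L X₀ - Y₀) + Z)
      + fip ((H X - R) - (H X₀ - R₀)) (ρ • (H X₀ - R₀) + W) := by
  set a₀ := L X₀ - Y₀
  set b₀ := H X₀ - R₀
  set d := (L X - Y) - a₀
  set e := (H X - R) - b₀
  have hsegment : ∀ t ∈ Set.Ioc (0 : ℝ) 1,
      0 ≤ t * (F R + G Y + fip d (β • a₀ + Z) + fip e (ρ • b₀ + W) - (F R₀ + G Y₀))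
        + t ^ 2 * (β / 2 * fip d d + ρ / 2 * fip e e) := by
    rintro t ⟨ht0, ht1⟩
    have hresL : L ((1 - t) • X₀ + t • X) - ((1 - t) • Y₀ + t • Y) = a₀ + t • d := by
      simp only [a₀, d, map_add, map_smul]
      module
    have hresH : H ((1 - t) • X₀ + t • X) - ((1 - t) • R₀ + t • R) = b₀ + t • e := by
      simp only [b₀, e, map_add, map_smul]
      module
    have hmin_t := hmin ((1 - t) • X₀ + t • X) ((1 - t) • R₀ + t • R) ((1 - t) • Y₀ + t • Y)
    rw [lag5_eq_augPenalty, lag5_eq_augPenalty, hresL, hresH, augPenalty_add_smul,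
      augPenalty_add_smul] at hmin_t
    have hFt := hF.2 (Set.mem_univ R₀) (Set.mem_univ R) (sub_nonneg.mpr ht1) ht0.le (by ring)
    have hGt := hG.2 (Set.mem_univ Y₀) (Set.mem_univ Y) (sub_nonneg.mpr ht1) ht0.le (by ring)
    simp only [smul_eq_mul] at hFt hGt
    linarith
  linarith [nonneg_of_forall_mul_add_sq_mul_nonneg hsegment]

theorem residual_bound_of_isSaddle5_lag5 (hF : ConvexOn ℝ Set.univ F)
    (hG : ConvexOn ℝ Set.univ G) {Xs Rs : Matrix (Fin m) (Fin n) ℝ}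
    {Ys Zs : Matrix (Fin p) (Fin q) ℝ} {Ws : Matrix (Fin m) (Fin n) ℝ}
    (hsaddle : IsSaddle5 (lag5 H L F G β ρ) Xs Rs Ys Zs Ws)
    {Xk Rk : Matrix (Fin m) (Fin n) ℝ} {Yk Zk : Matrix (Fin p) (Fin q) ℝ}
    {Wk : Matrix (Fin m) (Fin n) ℝ}
    (hmin : ∀ X R Y, lag5 H L F G β ρ Xk Rk Yk Zk Wk ≤ lag5 H L F G β ρ X R Y Zk Wk) :
    β * fip (L Xk - Yk) (L Xk - Yk) + ρ * fip (H Xk - Rk) (H Xk - Rk) ≤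
      -fip (Zk - Zs) (L Xk - Yk) - fip (Wk - Ws) (H Xk - Rk) := by
  obtain ⟨hLs, hHs⟩ := feasible_of_isSaddle5_lag5 H L F G β ρ hsaddle
  have hsad := lag5_variational_inequality H L F G β ρ hF hG
    (fun X R Y => (hsaddle X R Y Zs Ws).2) Xk Rk Yk
  have hit := lag5_variational_inequality H L F G β ρ hF hG hmin Xs Rs Ys
  simp only [hLs, hHs, sub_self, sub_zero, zero_sub, smul_zero, zero_add] at hsad hit
  simp only [fip_neg_left, fip_add_right, fip_smul_right] at hit
  rw [fip_sub_left Zk, fip_sub_left Wk, fip_comm Zk, fip_comm Zs, fip_comm Wk, fip_comm Ws]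
  linarith

end Lagrangian

theorem stmt14 {m n p q : ℕ}
    (H : Matrix (Fin m) (Fin n) ℝ →ₗ[ℝ] Matrix (Fin m) (Fin n) ℝ)
    (L : Matrix (Fin m) (Fin n) ℝ →ₗ[ℝ] Matrix (Fin p) (Fin q) ℝ)
    (F : Matrix (Fin m) (Fin n) ℝ → ℝ) (G : Matrix (Fin p) (Fin q) ℝ → ℝ)
    (hF : ConvexOn ℝ Set.univ F) (hG : ConvexOn ℝ Set.univ G)
    (β ρ : ℝ) (hβ : 0 < β) (hρ : 0 < ρ)
    (Xs Rs : Matrix (Fin m) (Fin n) ℝ) (Ys Zs : Matrix (Fin p) (Fin q) ℝ)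
    (Ws : Matrix (Fin m) (Fin n) ℝ)
    (hsaddle : IsSaddle5 (lag5 H L F G β ρ) Xs Rs Ys Zs Ws)
    (Xk Rk : Matrix (Fin m) (Fin n) ℝ) (Yk Zk : Matrix (Fin p) (Fin q) ℝ)
    (Wk : Matrix (Fin m) (Fin n) ℝ)
    (hmin : ∀ X R Y, lag5 H L F G β ρ Xk Rk Yk Zk Wk ≤ lag5 H L F G β ρ X R Y Zk Wk) :
    β ^ 2 * ρ * (fnorm (L Xk - Yk)) ^ 2 + β * ρ ^ 2 * (fnorm (H Xk - Rk)) ^ 2 ≤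
    -(β * ρ) * fip (Zk - Zs) (L Xk - Yk) - β * ρ * fip (Wk - Ws) (H Xk - Rk) := by
  have hbound := residual_bound_of_isSaddle5_lag5 H L F G β ρ hF hG hsaddle hmin
  rw [fnorm_sq, fnorm_sq]
  calc β ^ 2 * ρ * fip (L Xk - Yk) (L Xk - Yk) + β * ρ ^ 2 * fip (H Xk - Rk) (H Xk - Rk)
      = β * ρ * (β * fip (L Xk - Yk) (L Xk - Yk) + ρ * fip (H Xk - Rk) (H Xk - Rk)) := by ring
    _ ≤ β * ρ * (-fip (Zk - Zs) (L Xk - Yk) - fip (Wk - Ws) (H Xk - Rk)) :=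
      mul_le_mul_of_nonneg_left hbound (mul_pos hβ hρ).le
    _ = -(β * ρ) * fip (Zk - Zs) (L Xk - Yk) - β * ρ * fip (Wk - Ws) (H Xk - Rk) := by ring
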